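/- For integers k ≥ 1, 1 ≤ r ≤ k, and n ≥ 0: B_n^{(-k)} = Σ_{l=1}^{r} (-1)^{k-l} l! S(k,l) (l+1)^n + Σ_{m=1}^{k-r} (-1)^{k-m-r} binom(k,m) · r! · S(k-m, r) · Σ_{l=1}^{m} (-1)^{l+m} l! S(m,l) (l+r+1)^n. -/

import Mathlib

/-!
Since `l! S(k, l)` counts the surjections of a `k`-set onto an `l`-set, sorting a surjection onto
`j + r` points by the preimage of the first `j` points gives the convolution
`(j + r)! S(k, j + r) = ∑ₘ C(k, m) j! S(m, j) r! S(k - m, r)`.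
Split the sum defining `B_n^{(-k)}` at `l = r`, expand the terms with `l = r + j > r` by this
convolution, and interchange the sums over `j` and `m`.
-/

open Finset

/-- Stirling numbers of the second kind. -/
def S2 : ℕ → ℕ → ℕ
  | 0, 0 => 1
  | 0, _ + 1 => 0
  | _ + 1, 0 => 0
  | n + 1, k + 1 => S2 n k + (k + 1) * S2 n (k + 1)

/-- Unsigned Stirling numbers of the first kind. -/
def S1 : ℕ → ℕ → ℕ
  | 0, 0 => 1
  | 0, _ + 1 => 0
  | _ + 1, 0 => 0
  | n + 1, k + 1 => S1 n k + n * S1 n (k + 1)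

/-- Poly-Bernoulli number of negative index `B_n^{(-k)}` (closed power-sum formula). -/
def polyB (n k : ℕ) : ℤ :=
  ∑ l ∈ Finset.Icc 1 k, (-1 : ℤ) ^ (l + k) * (Nat.factorial l) * S2 k l * ((l : ℤ) + 1) ^ n

/-- Rising factorial `(r)_l = r (r+1) ⋯ (r+l-1)`. -/
def risingFact (r l : ℕ) : ℕ := ∏ i ∈ Finset.range l, (r + i)

theorem S2_eq_stirlingSecond : S2 = Nat.stirlingSecond := by
  funext n k
  induction n generalizing k with
  | zero => cases k <;> rfl
  | succ n ih =>
    cases k with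
    | zero => rfl
    | succ k => rw [S2, Nat.stirlingSecond_succ_succ, ih, ih, add_comm]

def surjCount (n k : ℕ) : ℕ := k.factorial * n.stirlingSecond k

-- Also true for `k = 0`, where the truncated `k - 1` is multiplied by `0`.
theorem surjCount_succ (n k : ℕ) :
    surjCount (n + 1) k = k * (surjCount n (k - 1) + surjCount n k) := by
  cases k with
  | zero => simp [surjCount]
  | succ k =>
    simp only [surjCount, Nat.stirlingSecond_succ_succ, Nat.factorial_succ, add_tsub_cancel_right]
    ring

theorem surjCount_zero_left (k : ℕ) : surjCount 0 k = if k = 0 then 1 else 0 := by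
  cases k <;> simp [surjCount]

theorem surjCount_eq_zero_of_lt {n k : ℕ} (h : n < k) : surjCount n k = 0 := by
  simp [surjCount, Nat.stirlingSecond_eq_zero_of_lt h]

theorem surjCount_add (n j r : ℕ) :
    surjCount n (j + r) =
      ∑ i ∈ range (n + 1), n.choose i * (surjCount i j * surjCount (n - i) r) := by
  induction n generalizing j r with
  | zero => by_cases hj : j = 0 <;> by_cases hr : r = 0 <;> simp [surjCount_zero_left, *]
  | succ n ih =>
    have pascal := sum_choose_succ_mul (R := ℕ) (fun a b => surjCount a j * surjCount b r) n
    simp only [Nat.cast_id] at pascal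
    have first : ∀ i ∈ range (n + 1), n.choose i * (surjCount i j * surjCount (n + 1 - i) r)
        = r * (n.choose i * (surjCount i j * surjCount (n - i) (r - 1)))
          + r * (n.choose i * (surjCount i j * surjCount (n - i) r)) := by
      intro i hi
      rw [Nat.sub_add_comm (mem_range_succ_iff.mp hi), surjCount_succ]
      ring
    have second : ∀ i ∈ range (n + 1), n.choose i * (surjCount (i + 1) j * surjCount (n - i) r)
        = j * (n.choose i * (surjCount i (j - 1) * surjCount (n - i) r))
          + j * (n.choose i * (surjCount i j * surjCount (n - i) r)) := by
      intro i _
      rw [surjCount_succ]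
      ring
    have hj : j * surjCount n (j - 1 + r) = j * surjCount n (j + r - 1) := by
      rcases j with _ | j
      · simp
      · rw [Nat.add_sub_cancel, Nat.add_right_comm, Nat.add_sub_cancel]
    have hr : r * surjCount n (j + (r - 1)) = r * surjCount n (j + r - 1) := by
      rcases r with _ | r
      · simp
      · rw [Nat.add_sub_cancel, ← Nat.add_assoc, Nat.add_sub_cancel]
    rw [pascal, sum_congr rfl first, sum_congr rfl second]
    simp only [sum_add_distrib, ← mul_sum, ← ih]
    rw [surjCount_succ, hj, hr]
    ring

theorem surjCount_add_eq_sum_Icc {k r : ℕ} (j : ℕ) (hrk : r ≤ k) :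
    surjCount k (j + r) =
      ∑ m ∈ Icc j (k - r), k.choose m * (surjCount m j * surjCount (k - m) r) := by
  rw [surjCount_add]
  refine (sum_subset (fun m hm => by simp only [mem_Icc, mem_range] at *; omega) ?_).symm
  intro m hmk hm
  simp only [mem_range, mem_Icc] at hmk hm
  rcases lt_or_ge m j with hmj | hjm
  · simp [surjCount_eq_zero_of_lt hmj]
  · simp [surjCount_eq_zero_of_lt (show k - m < r by omega)]

theorem sum_Ioc_alternating_eq_sum_choose_mul {k r : ℕ} (n : ℕ) (hrk : r ≤ k) :
    ∑ l ∈ Ioc r k,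
        (-1 : ℤ) ^ (l + k) * (l.factorial : ℤ) * (k.stirlingSecond l : ℤ) * ((l : ℤ) + 1) ^ n =
      ∑ m ∈ Icc 1 (k - r),
        (-1 : ℤ) ^ (k - m - r) * (k.choose m : ℤ) * (r.factorial : ℤ) *
          ((k - m).stirlingSecond r : ℤ) *
          ∑ l ∈ Icc 1 m,
            (-1 : ℤ) ^ (l + m) * (l.factorial : ℤ) * (m.stirlingSecond l : ℤ) *
              ((l : ℤ) + r + 1) ^ n := by
  have reindex : Ioc r k = (Icc 1 (k - r)).map (addRightEmbedding r) := by
    rw [map_add_right_Icc, ← Icc_add_one_left_eq_Ioc, Nat.sub_add_cancel hrk, add_comm]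
  simp only [mul_sum]
  rw [reindex, sum_map, sum_comm' (t' := Icc 1 (k - r)) (s' := fun l => Icc l (k - r))
    (fun m l => by simp only [mem_Icc]; omega)]
  refine sum_congr rfl fun l hl => ?_
  rw [mem_Icc] at hl
  calc (-1 : ℤ) ^ (l + r + k) * ((l + r).factorial : ℤ) * (k.stirlingSecond (l + r) : ℤ)
        * ((l + r : ℕ) + 1 : ℤ) ^ n
      = (-1 : ℤ) ^ (k - r + l) * ((l : ℤ) + r + 1) ^ n * (surjCount k (l + r) : ℤ) := by
        rw [neg_one_pow_congr (R := ℤ) (m := l + r + k) (n := k - r + l)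
          (by simp only [Nat.even_iff]; omega), surjCount]
        push_cast
        ring
    _ = _ := by
        rw [surjCount_add_eq_sum_Icc l hrk]
        push_cast
        rw [mul_sum]
        refine sum_congr rfl fun m hm => ?_
        rw [mem_Icc] at hm
        rw [surjCount, surjCount, neg_one_pow_congr (R := ℤ) (m := k - r + l)
          (n := k - m - r + (l + m)) (by simp only [Nat.even_iff]; omega), pow_add]
        push_cast
        ring

theorem stmt_15_general (k r n : ℕ) (hrk : r ≤ k) :
    polyB n k =
      (∑ l ∈ Finset.Icc 1 r,
          (-1 : ℤ) ^ (k - l) * (Nat.factorial l) * S2 k l * ((l : ℤ) + 1) ^ n) +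
        ∑ m ∈ Finset.Icc 1 (k - r),
          (-1 : ℤ) ^ (k - m - r) * (Nat.choose k m) * (Nat.factorial r) * S2 (k - m) r *
            ∑ l ∈ Finset.Icc 1 m,
              (-1 : ℤ) ^ (l + m) * (Nat.factorial l) * S2 m l * ((l : ℤ) + (r : ℤ) + 1) ^ n := by
  have Icc_one_eq_Ioc (a : ℕ) : Icc 1 a = Ioc 0 a := Icc_add_one_left_eq_Ioc 0 a
  rw [polyB, S2_eq_stirlingSecond, Icc_one_eq_Ioc k, ← sum_Ioc_consecutive _ (Nat.zero_le r) hrk,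
    sum_Ioc_alternating_eq_sum_choose_mul n hrk, Icc_one_eq_Ioc r]
  congr 1
  refine sum_congr rfl fun l hl => ?_
  rw [mem_Ioc] at hl
  rw [neg_one_pow_congr (R := ℤ) (m := l + k) (n := k - l) (by simp only [Nat.even_iff]; omega)]

theorem stmt_15 (k r n : ℕ) (hk : 1 ≤ k) (hr1 : 1 ≤ r) (hrk : r ≤ k) :
    polyB n k =
      (∑ l ∈ Finset.Icc 1 r,
          (-1 : ℤ) ^ (k - l) * (Nat.factorial l) * S2 k l * ((l : ℤ) + 1) ^ n) +
        ∑ m ∈ Finset.Icc 1 (k - r),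
          (-1 : ℤ) ^ (k - m - r) * (Nat.choose k m) * (Nat.factorial r) * S2 (k - m) r *
            ∑ l ∈ Finset.Icc 1 m,
              (-1 : ℤ) ^ (l + m) * (Nat.factorial l) * S2 m l * ((l : ℤ) + (r : ℤ) + 1) ^ n :=
  stmt_15_general k r n hrk
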